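/- arXiv:2112.15232 — 4 statements merged into one kernel-verified Lean document; each statement's English description precedes it below -/
import Mathlib

section
/- Let ABC be a triangle with semiperimeter p and sidelengths a,b,c. Define points A1,A2 on line BC with |BA1|=|CA2|=p-a (placed symmetrically about the midpoint of BC), B1,B2 on line CA with |CB1|=|AB2|=p-b, and C1,C2 on line AB with |AC1|=|BC2|=p-c. Then the Carnot product (AC1/BC1)(AC2/BC2)(BA1/CA1)(BA2/CA2)(CB1/AB1)(CB2/AB2) equals 1, so the six points A1,A2,B1,B2,C1,C2 lie on a common conic. -/
/-- Six points in the plane lie on a (possibly degenerate) conic. -/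
def IsConicThrough (s : Set (EuclideanSpace ℝ (Fin 2))) : Prop :=
  ∃ α β γ δ ε ζ : ℝ, (α, β, γ, δ, ε, ζ) ≠ 0 ∧
    ∀ P ∈ s, α * (P 0) ^ 2 + β * (P 0) * (P 1) + γ * (P 1) ^ 2
      + δ * (P 0) + ε * (P 1) + ζ = 0

section Aux

variable {E : Type*} [NormedAddCommGroup E] [NormedSpace ℝ E]

lemma dist_aux (X Y P : E) (t : ℝ) (h : P = X + t • (X - Y)) :
    dist X P = |t| * dist X Y ∧ dist Y P = |1 + t| * dist X Y := by
  subst h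
  constructor
  · rw [dist_eq_norm, dist_eq_norm,
      show X - (X + t • (X - Y)) = (-t) • (X - Y) by module, norm_smul]
    simp [Real.norm_eq_abs, abs_neg]
  · rw [dist_eq_norm, dist_eq_norm,
      show Y - (X + t • (X - Y)) = (-(1 + t)) • (X - Y) by module, norm_smul]
    simp only [Real.norm_eq_abs]
    rw [abs_neg]

lemma affine_ev (f : EuclideanSpace ℝ (Fin 2) →ᵃ[ℝ] ℝ) (X Y : EuclideanSpace ℝ (Fin 2)) (t : ℝ) :
    f (X + t • (X - Y)) = f X + t * (f X - f Y) := by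
  have h : X + t • (X - Y) = t • (X - Y) +ᵥ X := by
    simp [vadd_eq_add]; abel
  rw [h, AffineMap.map_vadd, map_smul,
    show X - Y = X -ᵥ Y from rfl, AffineMap.linearMap_vsub]
  simp [vsub_eq_sub, vadd_eq_add, smul_eq_mul]
  ring

lemma affine_form (f : EuclideanSpace ℝ (Fin 2) →ᵃ[ℝ] ℝ) :
    ∃ u v w : ℝ, ∀ P, f P = u * P 0 + v * P 1 + w := by
  refine ⟨f.linear (EuclideanSpace.single 0 1), f.linear (EuclideanSpace.single 1 1),
    f 0, fun P => ?_⟩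
  have h1 : P = (P 0) • EuclideanSpace.single (0 : Fin 2) (1 : ℝ)
      + (P 1) • EuclideanSpace.single (1 : Fin 2) (1 : ℝ) := by
    ext i
    fin_cases i <;> simp [EuclideanSpace.single_apply]
  have h2 : f P = f.linear P + f 0 := by
    rw [AffineMap.decomp f]; simp
  rw [h2]
  nth_rewrite 1 [h1]
  rw [map_add, map_smul, map_smul]
  simp [smul_eq_mul]
  ring

end Aux

set_option maxHeartbeats 2000000 in
/-- the Carnot product of the six V-ellipse vertices equals 1,
hence the six points lie on a common conic. -/
theorem stmt1 (A B C A1 A2 B1 B2 C1 C2 : EuclideanSpace ℝ (Fin 2))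
    (hABC : AffineIndependent ℝ ![A, B, C])
    (a b c p : ℝ)
    (ha : a = dist B C) (hb : b = dist C A) (hc : c = dist A B)
    (hp : p = (a + b + c) / 2)
    (hA1 : A1 = B + ((p - a) / a) • (B - C))
    (hA2 : A2 = C + ((p - a) / a) • (C - B))
    (hB1 : B1 = C + ((p - b) / b) • (C - A))
    (hB2 : B2 = A + ((p - b) / b) • (A - C))
    (hC1 : C1 = A + ((p - c) / c) • (A - B))
    (hC2 : C2 = B + ((p - c) / c) • (B - A)) :
    (dist A C1 / dist B C1) * (dist A C2 / dist B C2) *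
    (dist B A1 / dist C A1) * (dist B A2 / dist C A2) *
    (dist C B1 / dist A B1) * (dist C B2 / dist A B2) = 1 ∧
    IsConicThrough {A1, A2, B1, B2, C1, C2} := by
  have hncol : ¬ Collinear ℝ ({A, B, C} : Set (EuclideanSpace ℝ (Fin 2))) := by
    have h := hABC
    rw [affineIndependent_iff_not_collinear] at h
    have hs : ({A, B, C} : Set (EuclideanSpace ℝ (Fin 2))) = Set.range ![A, B, C] := by
      ext x
      simp [Matrix.range_cons]
      tauto
    rwa [hs]
  have hncolP : ∀ s : Set (EuclideanSpace ℝ (Fin 2)), s = {A, B, C} →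
      ¬ Collinear ℝ s := fun s hs => hs ▸ hncol
  have tri : ∀ X Y Z : EuclideanSpace ℝ (Fin 2),
      ¬ Collinear ℝ ({X, Y, Z} : Set (EuclideanSpace ℝ (Fin 2))) →
      dist X Z < dist X Y + dist Y Z := by
    intro X Y Z hnc
    rcases lt_or_ge (dist X Z) (dist X Y + dist Y Z) with h | h
    · exact h
    · exact absurd (dist_add_dist_eq_iff.mp
        (le_antisymm h (dist_triangle X Y Z))).collinear hnc
  have hbc : a < b + c := by
    have h := tri B A C (hncolP _ (by ext x; simp; tauto))
    rw [dist_comm B A, dist_comm A C] at h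
    rw [ha, hb, hc]; linarith
  have hca : b < c + a := by
    have h := tri C B A (hncolP _ (by ext x; simp; tauto))
    rw [dist_comm C B, dist_comm B A] at h
    rw [ha, hb, hc]; linarith
  have hab : c < a + b := by
    have h := tri A C B (hncolP _ (by ext x; simp; tauto))
    rw [dist_comm A C, dist_comm C B] at h
    rw [ha, hb, hc]; linarith
  have hinj := hABC.injective
  have hAB : A ≠ B := fun h => by
    have : (0 : Fin 3) = 1 := hinj (by simpa using h)
    simp at this
  have hBC : B ≠ C := fun h => by
    have : (1 : Fin 3) = 2 := hinj (by simpa using h)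
    simp at this
  have hCA : C ≠ A := fun h => by
    have : (2 : Fin 3) = 0 := hinj (by simpa using h)
    simp at this
  have ha0 : 0 < a := by rw [ha]; exact dist_pos.mpr hBC
  have hb0 : 0 < b := by rw [hb]; exact dist_pos.mpr hCA
  have hc0 : 0 < c := by rw [hc]; exact dist_pos.mpr hAB
  have hpa : 0 < p - a := by rw [hp]; linarith
  have hpb : 0 < p - b := by rw [hp]; linarith
  have hpc : 0 < p - c := by rw [hp]; linarith
  have hp0 : 0 < p := by rw [hp]; linarith
  -- distances
  have dC1 := dist_aux A B C1 ((p - c) / c) hC1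
  have dC2 := dist_aux B A C2 ((p - c) / c) hC2
  have dA1 := dist_aux B C A1 ((p - a) / a) hA1
  have dA2 := dist_aux C B A2 ((p - a) / a) hA2
  have dB1 := dist_aux C A B1 ((p - b) / b) hB1
  have dB2 := dist_aux A C B2 ((p - b) / b) hB2
  have habs1 : ∀ x y : ℝ, 0 < x → 0 < y → |x / y| = x / y := fun x y hx hy =>
    abs_of_pos (div_pos hx hy)
  have habs2 : ∀ x y : ℝ, 0 < x → 0 < y → 0 < x - y → |1 + (x - y) / y| = x / y := by
    intro x y hx hy hxy
    have hy' : y ≠ 0 := ne_of_gt hy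
    rw [show 1 + (x - y) / y = x / y by field_simp; ring]
    exact abs_of_pos (div_pos hx hy)
  have eAC1 : dist A C1 = p - c := by
    rw [dC1.1, habs1 _ _ hpc hc0, ← hc, div_mul_cancel₀ _ (ne_of_gt hc0)]
  have eBC1 : dist B C1 = p := by
    rw [dC1.2, habs2 p c hp0 hc0 hpc, ← hc, div_mul_cancel₀ _ (ne_of_gt hc0)]
  have eBC2 : dist B C2 = p - c := by
    rw [dC2.1, habs1 _ _ hpc hc0, dist_comm B A, ← hc, div_mul_cancel₀ _ (ne_of_gt hc0)]
  have eAC2 : dist A C2 = p := by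
    rw [dC2.2, habs2 p c hp0 hc0 hpc, dist_comm B A, ← hc, div_mul_cancel₀ _ (ne_of_gt hc0)]
  have eBA1 : dist B A1 = p - a := by
    rw [dA1.1, habs1 _ _ hpa ha0, ← ha, div_mul_cancel₀ _ (ne_of_gt ha0)]
  have eCA1 : dist C A1 = p := by
    rw [dA1.2, habs2 p a hp0 ha0 hpa, ← ha, div_mul_cancel₀ _ (ne_of_gt ha0)]
  have eCA2 : dist C A2 = p - a := by
    rw [dA2.1, habs1 _ _ hpa ha0, dist_comm C B, ← ha, div_mul_cancel₀ _ (ne_of_gt ha0)]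
  have eBA2 : dist B A2 = p := by
    rw [dA2.2, habs2 p a hp0 ha0 hpa, dist_comm C B, ← ha, div_mul_cancel₀ _ (ne_of_gt ha0)]
  have eCB1 : dist C B1 = p - b := by
    rw [dB1.1, habs1 _ _ hpb hb0, ← hb, div_mul_cancel₀ _ (ne_of_gt hb0)]
  have eAB1 : dist A B1 = p := by
    rw [dB1.2, habs2 p b hp0 hb0 hpb, ← hb, div_mul_cancel₀ _ (ne_of_gt hb0)]
  have eAB2 : dist A B2 = p - b := by
    rw [dB2.1, habs1 _ _ hpb hb0, dist_comm A C, ← hb, div_mul_cancel₀ _ (ne_of_gt hb0)]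
  have eCB2 : dist C B2 = p := by
    rw [dB2.2, habs2 p b hp0 hb0 hpb, dist_comm A C, ← hb, div_mul_cancel₀ _ (ne_of_gt hb0)]
  constructor
  · rw [eAC1, eBC1, eAC2, eBC2, eBA1, eCA1, eBA2, eCA2, eCB1, eAB1, eCB2, eAB2]
    field_simp
  · -- the conic, via barycentric coordinates
    have htop : affineSpan ℝ (Set.range ![A, B, C]) = ⊤ := by
      rw [hABC.affineSpan_eq_top_iff_card_eq_finrank_add_one]
      simp [finrank_euclideanSpace]
    obtain ⟨bas, hbase⟩ : ∃ bas : AffineBasis (Fin 3) ℝ (EuclideanSpace ℝ (Fin 2)),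
        ∀ i, bas i = ![A, B, C] i := ⟨⟨![A, B, C], hABC, htop⟩, fun _ => rfl⟩
    set L0 : EuclideanSpace ℝ (Fin 2) →ᵃ[ℝ] ℝ := bas.coord 0 with hL0
    set L1 : EuclideanSpace ℝ (Fin 2) →ᵃ[ℝ] ℝ := bas.coord 1 with hL1
    set L2 : EuclideanSpace ℝ (Fin 2) →ᵃ[ℝ] ℝ := bas.coord 2 with hL2
    have hbas0 : bas 0 = A := by rw [hbase 0]; rfl
    have hbas1 : bas 1 = B := by rw [hbase 1]; rfl
    have hbas2 : bas 2 = C := by rw [hbase 2]; rfl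
    have e00 : L0 A = 1 := by rw [hL0, ← hbas0, bas.coord_apply, if_pos rfl]
    have e01 : L0 B = 0 := by rw [hL0, ← hbas1, bas.coord_apply, if_neg (by decide)]
    have e02 : L0 C = 0 := by rw [hL0, ← hbas2, bas.coord_apply, if_neg (by decide)]
    have e10 : L1 A = 0 := by rw [hL1, ← hbas0, bas.coord_apply, if_neg (by decide)]
    have e11 : L1 B = 1 := by rw [hL1, ← hbas1, bas.coord_apply, if_pos rfl]
    have e12 : L1 C = 0 := by rw [hL1, ← hbas2, bas.coord_apply, if_neg (by decide)]
    have e20 : L2 A = 0 := by rw [hL2, ← hbas0, bas.coord_apply, if_neg (by decide)]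
    have e21 : L2 B = 0 := by rw [hL2, ← hbas1, bas.coord_apply, if_neg (by decide)]
    have e22 : L2 C = 1 := by rw [hL2, ← hbas2, bas.coord_apply, if_pos rfl]
    set f' : ℝ := (p ^ 2 + (p - a) ^ 2) / (2 * p * (p - a)) with hf'
    set g' : ℝ := (p ^ 2 + (p - b) ^ 2) / (2 * p * (p - b)) with hg'
    set h' : ℝ := (p ^ 2 + (p - c) ^ 2) / (2 * p * (p - c)) with hh'
    obtain ⟨u0, v0, w0, h0⟩ := affine_form L0
    obtain ⟨u1, v1, w1, h1⟩ := affine_form L1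
    obtain ⟨u2, v2, w2, h2⟩ := affine_form L2
    have key : ∀ P : EuclideanSpace ℝ (Fin 2),
        (u0^2 + u1^2 + u2^2 + 2*f'*u1*u2 + 2*g'*u2*u0 + 2*h'*u0*u1) * (P 0)^2
        + (2*u0*v0 + 2*u1*v1 + 2*u2*v2 + 2*f'*(u1*v2 + u2*v1) + 2*g'*(u2*v0 + u0*v2)
            + 2*h'*(u0*v1 + u1*v0)) * (P 0) * (P 1)
        + (v0^2 + v1^2 + v2^2 + 2*f'*v1*v2 + 2*g'*v2*v0 + 2*h'*v0*v1) * (P 1)^2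
        + (2*u0*w0 + 2*u1*w1 + 2*u2*w2 + 2*f'*(u1*w2 + u2*w1) + 2*g'*(u2*w0 + u0*w2)
            + 2*h'*(u0*w1 + u1*w0)) * (P 0)
        + (2*v0*w0 + 2*v1*w1 + 2*v2*w2 + 2*f'*(v1*w2 + v2*w1) + 2*g'*(v2*w0 + v0*w2)
            + 2*h'*(v0*w1 + v1*w0)) * (P 1)
        + (w0^2 + w1^2 + w2^2 + 2*f'*w1*w2 + 2*g'*w2*w0 + 2*h'*w0*w1)
        = (L0 P)^2 + (L1 P)^2 + (L2 P)^2 + 2*f'*(L1 P)*(L2 P)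
          + 2*g'*(L2 P)*(L0 P) + 2*h'*(L0 P)*(L1 P) := by
      intro P
      rw [h0, h1, h2]
      ring

    refine ⟨u0^2 + u1^2 + u2^2 + 2*f'*u1*u2 + 2*g'*u2*u0 + 2*h'*u0*u1,
      2*u0*v0 + 2*u1*v1 + 2*u2*v2 + 2*f'*(u1*v2 + u2*v1) + 2*g'*(u2*v0 + u0*v2)
        + 2*h'*(u0*v1 + u1*v0),
      v0^2 + v1^2 + v2^2 + 2*f'*v1*v2 + 2*g'*v2*v0 + 2*h'*v0*v1,
      2*u0*w0 + 2*u1*w1 + 2*u2*w2 + 2*f'*(u1*w2 + u2*w1) + 2*g'*(u2*w0 + u0*w2)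
        + 2*h'*(u0*w1 + u1*w0),
      2*v0*w0 + 2*v1*w1 + 2*v2*w2 + 2*f'*(v1*w2 + v2*w1) + 2*g'*(v2*w0 + v0*w2)
        + 2*h'*(v0*w1 + v1*w0),
      w0^2 + w1^2 + w2^2 + 2*f'*w1*w2 + 2*g'*w2*w0 + 2*h'*w0*w1, ?_, ?_⟩
    · -- nonzero: evaluate at A gives 1
      intro hzero
      simp only [Prod.mk_eq_zero] at hzero
      obtain ⟨hz0, hz1, hz2, hz3, hz4, hz5⟩ := hzero
      have hA' := key A
      rw [e00, e10, e20, hz0, hz1, hz2, hz3, hz4, hz5] at hA'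
      norm_num at hA'
    · -- vanishing at the six points
      intro P hP
      rw [key P]
      have hane : a ≠ 0 := ne_of_gt ha0
      have hbne : b ≠ 0 := ne_of_gt hb0
      have hcne : c ≠ 0 := ne_of_gt hc0
      have hpne : p ≠ 0 := ne_of_gt hp0
      have hpane : p - a ≠ 0 := ne_of_gt hpa
      have hpbne : p - b ≠ 0 := ne_of_gt hpb
      have hpcne : p - c ≠ 0 := ne_of_gt hpc
      simp only [Set.mem_insert_iff, Set.mem_singleton_iff] at hP
      rcases hP with h | h | h | h | h | h <;> subst h
      · rw [hA1, affine_ev L0 B C, affine_ev L1 B C, affine_ev L2 B C,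
          e01, e02, e11, e12, e21, e22, hf']
        field_simp
        ring
      · rw [hA2, affine_ev L0 C B, affine_ev L1 C B, affine_ev L2 C B,
          e01, e02, e11, e12, e21, e22, hf']
        field_simp
        ring
      · rw [hB1, affine_ev L0 C A, affine_ev L1 C A, affine_ev L2 C A,
          e00, e02, e10, e12, e20, e22, hg']
        field_simp
        ring
      · rw [hB2, affine_ev L0 A C, affine_ev L1 A C, affine_ev L2 A C,
          e00, e02, e10, e12, e20, e22, hg']
        field_simp
        ring
      · rw [hC1, affine_ev L0 A B, affine_ev L1 A B, affine_ev L2 A B,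
          e00, e01, e10, e11, e20, e21, hh']
        field_simp
        ring
      · rw [hC2, affine_ev L0 B A, affine_ev L1 B A, affine_ev L2 B A,
          e00, e01, e10, e11, e20, e21, hh']
        field_simp
        ring
end

section
/- Let ABC be a right triangle with the right angle at C, circumcenter O (the midpoint of AB), and let C' be the reflection of C about O. Then C' lies on all three V-ellipses Ea = {P : |PB|+|PC| = |AB|+|AC|}, Eb = {P : |PC|+|PA| = |BC|+|BA|}, and Ec = {P : |PA|+|PB| = |CA|+|CB|}. -/
open RealInnerProductSpace

/-- for a right triangle with right angle at `C`, the reflection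
`C' = A + B - C` of `C` in the circumcenter (the midpoint of `AB`) lies on all
three V-ellipses. -/
theorem stmt3 (A B C O C' : EuclideanSpace ℝ (Fin 2))
    (hABC : AffineIndependent ℝ ![A, B, C])
    (hRight : (inner ℝ (A - C) (B - C) : ℝ) = 0)
    (hO : O = midpoint ℝ A B)
    (hC' : C' = O + (O - C)) :
    dist C' B + dist C' C = dist A B + dist A C ∧
    dist C' C + dist C' A = dist B C + dist B A ∧
    dist C' A + dist C' B = dist C A + dist C B := by
  subst hO hC'
  have hC'' : midpoint ℝ A B + (midpoint ℝ A B - C) = A + B - C := by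
    rw [midpoint_eq_smul_add, invOf_eq_inv]
    module
  rw [hC'']
  have h1 : dist (A + B - C) B = dist A C := by
    rw [dist_eq_norm, dist_eq_norm]
    congr 1
    abel
  have h2 : dist (A + B - C) A = dist B C := by
    rw [dist_eq_norm, dist_eq_norm]
    congr 1
    abel
  have h3 : dist (A + B - C) C = dist A B := by
    rw [dist_eq_norm, dist_eq_norm]
    have e1 : A + B - C - C = (A - C) + (B - C) := by abel
    have e2 : A - B = (A - C) - (B - C) := by abel
    rw [e1, e2]
    rw [← Real.sqrt_sq (norm_nonneg ((A - C) + (B - C))),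
        ← Real.sqrt_sq (norm_nonneg ((A - C) - (B - C)))]
    congr 1
    have v1 := norm_add_sq_real (A - C) (B - C)
    have v2 := norm_sub_sq_real (A - C) (B - C)
    rw [hRight] at v1 v2
    linarith
  rw [h1, h2, h3, dist_comm C A, dist_comm C B, dist_comm B A]
  exact ⟨by ring, by ring, by ring⟩
end

section
/- Let ABC be a triangle and P a point. For each pair of vertices, construct the ellipse with those vertices as foci passing through P (the P-ellipses Ea*, Eb*, Ec*). Let A1,A2 be the intersections of Ea* with line BC, and similarly B1,B2 and C1,C2. Then segments A1A2 and BC share their midpoint (similarly cyclically), and consequently the six points A1,A2,B1,B2,C1,C2 lie on a conic. -/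
open AffineMap

lemma sideLemma (B C P X1 X2 : EuclideanSpace ℝ (Fin 2))
    (hBC : B ≠ C)
    (hP : P ∉ affineSpan ℝ ({B, C} : Set (EuclideanSpace ℝ (Fin 2))))
    (h1 : X1 ∈ affineSpan ℝ ({B, C} : Set (EuclideanSpace ℝ (Fin 2))))
    (h2 : X2 ∈ affineSpan ℝ ({B, C} : Set (EuclideanSpace ℝ (Fin 2))))
    (e1 : dist X1 B + dist X1 C = dist P B + dist P C)
    (e2 : dist X2 B + dist X2 C = dist P B + dist P C)
    (h12 : X1 ≠ X2) :
    ∃ t : ℝ, t * (1 - t) ≠ 0 ∧ X1 = lineMap B C t ∧ X2 = lineMap B C (1 - t) := by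
  have hd : (0:ℝ) < dist B C := dist_pos.2 hBC
  set d := dist B C with hdd
  set s := dist P B + dist P C with hs
  have htri : d ≤ s := by
    rw [hdd, hs, dist_comm P B]; exact dist_triangle B P C
  have hsd : d < s := by
    rcases htri.lt_or_eq with h | h
    · exact h
    · exfalso
      apply hP
      have heq : dist B P + dist P C = dist B C := by
        rw [hdd, hs] at h; rw [dist_comm B P]; linarith
      exact (dist_add_dist_eq_iff.1 heq).mem_affineSpan
  obtain ⟨t1, ht1⟩ : ∃ r : ℝ, X1 = lineMap B C r := by
    obtain ⟨r, hr⟩ := vadd_left_mem_affineSpan_pair.1 (by rwa [vsub_vadd X1 B] : (X1 -ᵥ B) +ᵥ B ∈ _)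
    exact ⟨r, by rw [lineMap_apply, hr, vsub_vadd]⟩
  obtain ⟨t2, ht2⟩ : ∃ r : ℝ, X2 = lineMap B C r := by
    obtain ⟨r, hr⟩ := vadd_left_mem_affineSpan_pair.1 (by rwa [vsub_vadd X2 B] : (X2 -ᵥ B) +ᵥ B ∈ _)
    exact ⟨r, by rw [lineMap_apply, hr, vsub_vadd]⟩
  have key : ∀ r : ℝ, (|r| + |1 - r|) * d = s → r = (1 + s/d)/2 ∨ r = (1 - s/d)/2 := by
    intro r hr
    have hk : |r| + |1 - r| = s / d := by field_simp at hr ⊢; linarith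
    have hk1 : (1:ℝ) < s / d := (one_lt_div hd).2 hsd
    rcases le_or_gt r 0 with h0 | h0
    · right
      rw [abs_of_nonpos h0, abs_of_nonneg (by linarith)] at hk
      linarith
    rcases le_or_gt 1 r with h1 | h1
    · left
      rw [abs_of_nonneg (by linarith), abs_of_nonpos (by linarith)] at hk
      linarith
    · exfalso
      rw [abs_of_nonneg (by linarith), abs_of_nonneg (by linarith)] at hk
      linarith
  have hr1 : (|t1| + |1 - t1|) * d = s := by
    have b1 : dist X1 B = |t1| * d := by rw [ht1, dist_lineMap_left]; simp [hdd]
    have c1 : dist X1 C = |1 - t1| * d := by rw [ht1, dist_lineMap_right]; simp [hdd]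
    rw [← e1, b1, c1]; ring
  have hr2 : (|t2| + |1 - t2|) * d = s := by
    have b1 : dist X2 B = |t2| * d := by rw [ht2, dist_lineMap_left]; simp [hdd]
    have c1 : dist X2 C = |1 - t2| * d := by rw [ht2, dist_lineMap_right]; simp [hdd]
    rw [← e2, b1, c1]; ring
  have hne : t1 ≠ t2 := fun h => h12 (by rw [ht1, ht2, h])
  have hk1 : (1:ℝ) < s / d := (one_lt_div hd).2 hsd
  have hsum : t2 = 1 - t1 := by
    rcases key t1 hr1 with h | h <;> rcases key t2 hr2 with h' | h'
    · exact absurd (h.trans h'.symm) hne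
    · rw [h, h']; ring
    · rw [h, h']; ring
    · exact absurd (h.trans h'.symm) hne
  refine ⟨t1, ?_, ht1, by rwa [← hsum]⟩
  rcases key t1 hr1 with h | h <;> rw [h] <;> intro heq <;> nlinarith [hk1]

lemma affine_eval (f : EuclideanSpace ℝ (Fin 2) →ᵃ[ℝ] ℝ) (X : EuclideanSpace ℝ (Fin 2)) :
    f X = f 0 + f.linear (EuclideanSpace.single 0 1) * X 0
        + f.linear (EuclideanSpace.single 1 1) * X 1 := by
  have hX : X = X 0 • (EuclideanSpace.single 0 1 : EuclideanSpace ℝ (Fin 2))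
      + X 1 • EuclideanSpace.single 1 1 := by
    ext j; fin_cases j <;> simp [EuclideanSpace.single_apply]
  have h1 : f X = f.linear X + f 0 := by
    have := f.map_vadd (0 : EuclideanSpace ℝ (Fin 2)) X
    simpa [vadd_eq_add] using this
  rw [h1]
  conv_lhs => rw [hX]
  simp only [map_add, map_smul, smul_eq_mul]
  ring

lemma midpoint_lineMap (B C : EuclideanSpace ℝ (Fin 2)) (t : ℝ) :
    midpoint ℝ (lineMap B C t) (lineMap B C (1-t)) = midpoint ℝ B C := by
  rw [midpoint_eq_smul_add, midpoint_eq_smul_add, lineMap_apply_module, lineMap_apply_module]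
  rw [invOf_eq_inv]
  module

/-- the vertices of the three P-ellipses (intersections with the
respective sidelines) are pairwise symmetric about the side midpoints, and the
six of them lie on a conic. -/
theorem stmt5 (A B C P A1 A2 B1 B2 C1 C2 : EuclideanSpace ℝ (Fin 2))
    (hABC : AffineIndependent ℝ ![A, B, C])
    (hPa : P ∉ affineSpan ℝ ({B, C} : Set (EuclideanSpace ℝ (Fin 2))))
    (hPb : P ∉ affineSpan ℝ ({C, A} : Set (EuclideanSpace ℝ (Fin 2))))
    (hPc : P ∉ affineSpan ℝ ({A, B} : Set (EuclideanSpace ℝ (Fin 2))))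
    (hA1 : A1 ∈ affineSpan ℝ ({B, C} : Set (EuclideanSpace ℝ (Fin 2))))
    (hA2 : A2 ∈ affineSpan ℝ ({B, C} : Set (EuclideanSpace ℝ (Fin 2))))
    (hA1e : dist A1 B + dist A1 C = dist P B + dist P C)
    (hA2e : dist A2 B + dist A2 C = dist P B + dist P C)
    (hA12 : A1 ≠ A2)
    (hB1 : B1 ∈ affineSpan ℝ ({C, A} : Set (EuclideanSpace ℝ (Fin 2))))
    (hB2 : B2 ∈ affineSpan ℝ ({C, A} : Set (EuclideanSpace ℝ (Fin 2))))
    (hB1e : dist B1 C + dist B1 A = dist P C + dist P A)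
    (hB2e : dist B2 C + dist B2 A = dist P C + dist P A)
    (hB12 : B1 ≠ B2)
    (hC1 : C1 ∈ affineSpan ℝ ({A, B} : Set (EuclideanSpace ℝ (Fin 2))))
    (hC2 : C2 ∈ affineSpan ℝ ({A, B} : Set (EuclideanSpace ℝ (Fin 2))))
    (hC1e : dist C1 A + dist C1 B = dist P A + dist P B)
    (hC2e : dist C2 A + dist C2 B = dist P A + dist P B)
    (hC12 : C1 ≠ C2) :
    midpoint ℝ A1 A2 = midpoint ℝ B C ∧
    midpoint ℝ B1 B2 = midpoint ℝ C A ∧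
    midpoint ℝ C1 C2 = midpoint ℝ A B ∧
    IsConicThrough {A1, A2, B1, B2, C1, C2} := by
  have hAB : A ≠ B := by simpa using hABC.injective.ne (show (0:Fin 3) ≠ 1 by decide)
  have hBC : B ≠ C := by simpa using hABC.injective.ne (show (1:Fin 3) ≠ 2 by decide)
  have hCA : C ≠ A := by simpa using hABC.injective.ne (show (2:Fin 3) ≠ 0 by decide)
  obtain ⟨t, ht, hA1', hA2'⟩ := sideLemma B C P A1 A2 hBC hPa hA1 hA2 hA1e hA2e hA12
  obtain ⟨u, hu, hB1', hB2'⟩ := sideLemma C A P B1 B2 hCA hPb hB1 hB2 hB1e hB2e hB12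
  obtain ⟨w, hw, hC1', hC2'⟩ := sideLemma A B P C1 C2 hAB hPc hC1 hC2 hC1e hC2e hC12
  refine ⟨by rw [hA1', hA2']; exact midpoint_lineMap B C t,
          by rw [hB1', hB2']; exact midpoint_lineMap C A u,
          by rw [hC1', hC2']; exact midpoint_lineMap A B w, ?_⟩
  -- set up barycentric coordinates
  have htop : affineSpan ℝ (Set.range ![A, B, C]) = ⊤ := by
    rw [hABC.affineSpan_eq_top_iff_card_eq_finrank_add_one]
    simp
  let b : AffineBasis (Fin 3) ℝ (EuclideanSpace ℝ (Fin 2)) := ⟨![A, B, C], hABC, htop⟩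
  have hbA : b 0 = A := rfl
  have hbB : b 1 = B := rfl
  have hbC : b 2 = C := rfl
  have cA0 : b.coord 0 A = 1 := by rw [← hbA, b.coord_apply]; norm_num [Fin.ext_iff]
  have cA1 : b.coord 1 A = 0 := by rw [← hbA, b.coord_apply]; norm_num [Fin.ext_iff]
  have cA2 : b.coord 2 A = 0 := by rw [← hbA, b.coord_apply]; norm_num [Fin.ext_iff]
  have cB0 : b.coord 0 B = 0 := by rw [← hbB, b.coord_apply]; norm_num [Fin.ext_iff]
  have cB1 : b.coord 1 B = 1 := by rw [← hbB, b.coord_apply]; norm_num [Fin.ext_iff]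
  have cB2 : b.coord 2 B = 0 := by rw [← hbB, b.coord_apply]; norm_num [Fin.ext_iff]
  have cC0 : b.coord 0 C = 0 := by rw [← hbC, b.coord_apply]; norm_num [Fin.ext_iff]
  have cC1 : b.coord 1 C = 0 := by rw [← hbC, b.coord_apply]; norm_num [Fin.ext_iff]
  have cC2 : b.coord 2 C = 1 := by rw [← hbC, b.coord_apply]; norm_num [Fin.ext_iff]
  set p0 := b.coord 0 0 with hp0
  set p1 := b.coord 1 0 with hp1
  set p2 := b.coord 2 0 with hp2
  set q0 := (b.coord 0).linear (EuclideanSpace.single 0 1) with hq0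
  set q1 := (b.coord 1).linear (EuclideanSpace.single 0 1) with hq1
  set q2 := (b.coord 2).linear (EuclideanSpace.single 0 1) with hq2
  set r0 := (b.coord 0).linear (EuclideanSpace.single 1 1) with hr0
  set r1 := (b.coord 1).linear (EuclideanSpace.single 1 1) with hr1
  set r2 := (b.coord 2).linear (EuclideanSpace.single 1 1) with hr2
  set da := -((1-t)^2 + t^2)/(t*(1-t)) with hda
  set db := -(u^2 + (1-u)^2)/(u*(1-u)) with hdb
  set dc := -((1-w)^2 + w^2)/(w*(1-w)) with hdc
  set α := q0^2 + q1^2 + q2^2 + da*(q1*q2) + db*(q2*q0) + dc*(q0*q1) with hα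
  set β := 2*(q0*r0 + q1*r1 + q2*r2) + da*(q1*r2 + q2*r1) + db*(q2*r0 + q0*r2)
      + dc*(q0*r1 + q1*r0) with hβ
  set γ := r0^2 + r1^2 + r2^2 + da*(r1*r2) + db*(r2*r0) + dc*(r0*r1) with hγ
  set δ := 2*(p0*q0 + p1*q1 + p2*q2) + da*(p1*q2 + p2*q1) + db*(p2*q0 + p0*q2)
      + dc*(p0*q1 + p1*q0) with hδ
  set ε := 2*(p0*r0 + p1*r1 + p2*r2) + da*(p1*r2 + p2*r1) + db*(p2*r0 + p0*r2)
      + dc*(p0*r1 + p1*r0) with hε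
  set ζ := p0^2 + p1^2 + p2^2 + da*(p1*p2) + db*(p2*p0) + dc*(p0*p1) with hζ
  have key : ∀ X : EuclideanSpace ℝ (Fin 2),
      α * (X 0) ^ 2 + β * (X 0) * (X 1) + γ * (X 1) ^ 2 + δ * (X 0) + ε * (X 1) + ζ
      = (b.coord 0 X)^2 + (b.coord 1 X)^2 + (b.coord 2 X)^2
        + da * (b.coord 1 X) * (b.coord 2 X) + db * (b.coord 2 X) * (b.coord 0 X)
        + dc * (b.coord 0 X) * (b.coord 1 X) := by
    intro X
    rw [affine_eval (b.coord 0) X, affine_eval (b.coord 1) X, affine_eval (b.coord 2) X,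
      ← hp0, ← hp1, ← hp2, ← hq0, ← hq1, ← hq2, ← hr0, ← hr1, ← hr2,
      hα, hβ, hγ, hδ, hε, hζ]
    ring
  have ht0 : t ≠ 0 := fun h => ht (by rw [h]; ring)
  have ht1' : (1:ℝ) - t ≠ 0 := fun h => ht (by rw [h]; ring)
  have hu0 : u ≠ 0 := fun h => hu (by rw [h]; ring)
  have hu1' : (1:ℝ) - u ≠ 0 := fun h => hu (by rw [h]; ring)
  have hw0 : w ≠ 0 := fun h => hw (by rw [h]; ring)
  have hw1' : (1:ℝ) - w ≠ 0 := fun h => hw (by rw [h]; ring)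
  have Hda : da * (t * (1 - t)) = -((1-t)^2 + t^2) := by rw [hda, div_mul_cancel₀ _ ht]
  have Hdb : db * (u * (1 - u)) = -(u^2 + (1-u)^2) := by rw [hdb, div_mul_cancel₀ _ hu]
  have Hdc : dc * (w * (1 - w)) = -((1-w)^2 + w^2) := by rw [hdc, div_mul_cancel₀ _ hw]
  refine ⟨α, β, γ, δ, ε, ζ, ?_, ?_⟩
  · intro h
    simp only [Prod.mk_eq_zero] at h
    obtain ⟨h1, h2, h3, h4, h5, h6⟩ := h
    have hkA := key A
    rw [h1, h2, h3, h4, h5, h6, cA0, cA1, cA2] at hkA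
    norm_num at hkA
  · intro Q hQ
    simp only [Set.mem_insert_iff, Set.mem_singleton_iff] at hQ
    rcases hQ with rfl | rfl | rfl | rfl | rfl | rfl
    · rw [key Q, hA1']
      simp only [AffineMap.apply_lineMap, cB0, cB1, cB2, cC0, cC1, cC2]
      simp only [lineMap_apply_module, smul_eq_mul]
      linear_combination Hda
    · rw [key Q, hA2']
      simp only [AffineMap.apply_lineMap, cB0, cB1, cB2, cC0, cC1, cC2]
      simp only [lineMap_apply_module, smul_eq_mul]
      linear_combination Hda
    · rw [key Q, hB1']
      simp only [AffineMap.apply_lineMap, cC0, cC1, cC2, cA0, cA1, cA2]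
      simp only [lineMap_apply_module, smul_eq_mul]
      linear_combination Hdb
    · rw [key Q, hB2']
      simp only [AffineMap.apply_lineMap, cC0, cC1, cC2, cA0, cA1, cA2]
      simp only [lineMap_apply_module, smul_eq_mul]
      linear_combination Hdb
    · rw [key Q, hC1']
      simp only [AffineMap.apply_lineMap, cA0, cA1, cA2, cB0, cB1, cB2]
      simp only [lineMap_apply_module, smul_eq_mul]
      linear_combination Hdc
    · rw [key Q, hC2']
      simp only [AffineMap.apply_lineMap, cA0, cA1, cA2, cB0, cB1, cB2]
      simp only [lineMap_apply_module, smul_eq_mul]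
      linear_combination Hdc
end

section
/- Let A=(-1,0) and B=(1,0) and let C be a point with the triangle ABC having the property tan(A/2)+tan(B/2)+tan(C/2) = 2 (so the outer Soddy circle degenerates to a line L tangent to the three kissing circles). Then the circle with diameter AB is also tangent to L: if At, Bt are the tangency points of L with the kissing circles at A and B, and T is the tangency point of those two kissing circles, then the foot M of the perpendicular from the midpoint O of AB to L satisfies |OM| = |AB|/2 and M is the midpoint of At Bt. -/
/-!
Let `u` be a unit normal of `L`. Each centre is its tangency point plus a signed multiple of `u`
whose absolute value is the radius. If two externally tangent circles have centres on opposite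
sides of `L`, Pythagoras forces them to touch `L` at the same point. Were this the case for `A`
and `B`, the centre `C` would be on the opposite side from one of them as well, and all three
centres would lie on one normal of `L`. So `A` and `B` are on the same side, and `O` is the
midpoint of `At Bt` displaced along `u` by the mean radius `((p - a) + (p - b)) / 2 = c / 2`.
-/

open EuclideanGeometry
open Module RealInnerProductSpace

theorem Submodule.exists_norm_eq_one_orthogonal_eq_span {E : Type*} [NormedAddCommGroup E]
    [InnerProductSpace ℝ E] [FiniteDimensional ℝ E] {K : Submodule ℝ E}
    (hK : finrank ℝ K + 1 = finrank ℝ E) : ∃ u : E, ‖u‖ = 1 ∧ Kᗮ = ℝ ∙ u := by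
  have hK1 : finrank ℝ Kᗮ = 1 := by
    have := K.finrank_add_finrank_orthogonal
    lia
  obtain ⟨⟨w, hw⟩, hw0, -⟩ := finrank_eq_one_iff'.mp hK1
  have hw0 : w ≠ 0 := by simpa using hw0
  refine ⟨‖w‖⁻¹ • w, norm_smul_inv_norm hw0, ?_⟩
  rw [Submodule.span_singleton_smul_eq (by simpa using hw0)]
  exact eq_span_singleton_of_mem_of_finrank_eq_one hK1 hw hw0

section Hyperplane

variable {E : Type*} [NormedAddCommGroup E] [InnerProductSpace ℝ E] {s : AffineSubspace ℝ E}

theorem coe_orthogonalProjection_eq_of_forall_dist_le [Nonempty s]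
    [s.direction.HasOrthogonalProjection] {p f : E} (hf : f ∈ s)
    (hmin : ∀ x ∈ s, dist p f ≤ dist p x) : (orthogonalProjection s p : E) = f := by
  have hpyth := dist_sq_eq_dist_orthogonalProjection_sq_add_dist_orthogonalProjection_sq p hf
  have hle : dist p f ≤ dist p (orthogonalProjection s p) := hmin _ (orthogonalProjection_mem p)
  rw [dist_comm f p] at hpyth
  have : dist f (orthogonalProjection s p) = 0 := by
    nlinarith [dist_nonneg (x := p) (y := f), dist_nonneg (x := f) (y := orthogonalProjection s p)]
  exact (dist_eq_zero.mp this).symm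

theorem collinear_add_smul (f u : E) (α β γ : ℝ) :
    Collinear ℝ ({f + α • u, f + β • u, f + γ • u} : Set E) := by
  rw [collinear_iff_exists_forall_eq_smul_vadd]
  refine ⟨f, u, ?_⟩
  simp only [Set.mem_insert_iff, Set.mem_singleton_iff, vadd_eq_add]
  rintro p (rfl | rfl | rfl) <;> exact ⟨_, add_comm _ _⟩

theorem midpoint_add_smul (f g u : E) (α β : ℝ) :
    midpoint ℝ (f + α • u) (g + β • u) = midpoint ℝ f g + ((α + β) / 2) • u := by
  simp only [midpoint_eq_smul_add, invOf_eq_inv]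
  module

variable {u : E}

theorem exists_eq_add_smul_of_forall_dist_le [s.direction.HasOrthogonalProjection] (hu : ‖u‖ = 1)
    (hsu : s.directionᗮ = ℝ ∙ u) {p f : E} (hf : f ∈ s) (hmin : ∀ x ∈ s, dist p f ≤ dist p x) :
    ∃ α : ℝ, p = f + α • u ∧ |α| = dist p f := by
  have : Nonempty s := ⟨⟨f, hf⟩⟩
  have hperp : p - f ∈ ℝ ∙ u := by
    rw [← hsu, ← coe_orthogonalProjection_eq_of_forall_dist_le hf hmin]
    exact vsub_orthogonalProjection_mem_direction_orthogonal s p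
  obtain ⟨α, hα⟩ := Submodule.mem_span_singleton.mp hperp
  refine ⟨α, by rw [hα, add_sub_cancel], ?_⟩
  rw [dist_eq_norm, ← hα, norm_smul, hu, mul_one, Real.norm_eq_abs]

theorem dist_add_smul_sq (hu : ‖u‖ = 1) (hus : u ∈ s.directionᗮ) {f g : E} (hf : f ∈ s)
    (hg : g ∈ s) (α β : ℝ) :
    dist (f + α • u) (g + β • u) ^ 2 = dist f g ^ 2 + (α - β) ^ 2 := by
  have hfg : ⟪f - g, (α - β) • u⟫ = 0 :=
    Submodule.inner_right_of_mem_orthogonal (AffineSubspace.vsub_mem_direction hf hg)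
      (Submodule.smul_mem _ _ hus)
  rw [dist_eq_norm, dist_eq_norm, show f + α • u - (g + β • u) = (f - g) + (α - β) • u by module,
    norm_add_sq_real, hfg, norm_smul, hu, mul_one, Real.norm_eq_abs, sq_abs]
  ring

theorem eq_of_dist_add_smul_eq_abs_add_abs (hu : ‖u‖ = 1) (hus : u ∈ s.directionᗮ) {f g : E}
    (hf : f ∈ s) (hg : g ∈ s) {α β : ℝ} (hαβ : α * β ≤ 0)
    (h : dist (f + α • u) (g + β • u) = |α| + |β|) : f = g := by
  have hsq := dist_add_smul_sq hu hus hf hg α β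
  have habs : |α| * |β| = -(α * β) := by rw [← abs_mul, abs_of_nonpos hαβ]
  rw [h] at hsq
  have : dist f g ^ 2 = 0 := by nlinarith [sq_abs α, sq_abs β]
  exact dist_eq_zero.mp (pow_eq_zero_iff two_ne_zero |>.mp this)

theorem mul_nonneg_of_dist_add_smul_eq_abs_add_abs (hu : ‖u‖ = 1) (hus : u ∈ s.directionᗮ)
    {fA fB fC : E} (hfA : fA ∈ s) (hfB : fB ∈ s) (hfC : fC ∈ s) {α β γ : ℝ}
    (hAB : dist (fA + α • u) (fB + β • u) = |α| + |β|)
    (hBC : dist (fB + β • u) (fC + γ • u) = |β| + |γ|)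
    (hCA : dist (fC + γ • u) (fA + α • u) = |γ| + |α|)
    (hABC : ¬ Collinear ℝ ({fA + α • u, fB + β • u, fC + γ • u} : Set E)) : 0 ≤ α * β := by
  by_contra! hαβ
  obtain rfl := eq_of_dist_add_smul_eq_abs_add_abs hu hus hfA hfB hαβ.le hAB
  have : γ * α ≤ 0 ∨ β * γ ≤ 0 := by
    by_contra! h
    have : α * β * γ ^ 2 ≤ 0 := mul_nonpos_of_nonpos_of_nonneg hαβ.le (sq_nonneg γ)
    nlinarith [mul_pos h.1 h.2]
  rcases this with hγα | hβγ
  · obtain rfl := eq_of_dist_add_smul_eq_abs_add_abs hu hus hfC hfA hγα hCA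
    exact hABC (collinear_add_smul _ u α β γ)
  · obtain rfl := eq_of_dist_add_smul_eq_abs_add_abs hu hus hfB hfC hβγ hBC
    exact hABC (collinear_add_smul _ u α β γ)

theorem coe_orthogonalProjection_midpoint_add_smul [Nonempty s]
    [s.direction.HasOrthogonalProjection] (hus : u ∈ s.directionᗮ) {f g : E} (hf : f ∈ s)
    (hg : g ∈ s) (α β : ℝ) :
    (orthogonalProjection s (midpoint ℝ (f + α • u) (g + β • u)) : E) = midpoint ℝ f g := by
  rw [midpoint_add_smul, add_comm, ← vadd_eq_add,
    orthogonalProjection_vadd_eq_self (s.convex.midpoint_mem hf hg) (Submodule.smul_mem _ _ hus)]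

end Hyperplane

theorem stmt18_general (A B C : EuclideanSpace ℝ (Fin 2))
    (hABC : AffineIndependent ℝ ![A, B, C])
    (a b c p : ℝ)
    (ha : a = dist B C) (hb : b = dist C A) (hc : c = dist A B)
    (hp : p = (a + b + c) / 2)
    (L : AffineSubspace ℝ (EuclideanSpace ℝ (Fin 2)))
    (hline : ∃ X Y : EuclideanSpace ℝ (Fin 2), X ≠ Y ∧
      L = affineSpan ℝ ({X, Y} : Set (EuclideanSpace ℝ (Fin 2))))
    (At Bt Ct : EuclideanSpace ℝ (Fin 2))
    -- `L` is tangent to the kissing circle centered at `A` at `At`: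
    (hAt : At ∈ L) (hAtd : dist A At = p - a)
    (hAtmin : ∀ Q ∈ L, p - a ≤ dist A Q)
    -- `L` is tangent to the kissing circle centered at `B` at `Bt`:
    (hBt : Bt ∈ L) (hBtd : dist B Bt = p - b)
    (hBtmin : ∀ Q ∈ L, p - b ≤ dist B Q)
    -- `L` is tangent to the kissing circle centered at `C` at `Ct`:
    (hCt : Ct ∈ L) (hCtd : dist C Ct = p - c)
    (hCtmin : ∀ Q ∈ L, p - c ≤ dist C Q)
    (O M : EuclideanSpace ℝ (Fin 2))
    (hO : O = midpoint ℝ A B)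
    -- `M` is the foot of the perpendicular from `O` to `L`:
    (hM : M ∈ L) (hMmin : ∀ Q ∈ L, dist O M ≤ dist O Q) :
    dist O M = dist A B / 2 ∧ M = midpoint ℝ At Bt := by
  have : Nonempty L := ⟨⟨At, hAt⟩⟩
  obtain ⟨u, hu, hLu⟩ : ∃ u, ‖u‖ = 1 ∧ L.directionᗮ = ℝ ∙ u := by
    obtain ⟨X, Y, hXY, rfl⟩ := hline
    refine Submodule.exists_norm_eq_one_orthogonal_eq_span ?_
    rw [direction_affineSpan, vectorSpan_pair, finrank_span_singleton (vsub_ne_zero.mpr hXY),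
      finrank_euclideanSpace_fin]
  have hus : u ∈ L.directionᗮ := hLu ▸ Submodule.mem_span_singleton_self u
  obtain ⟨α, rfl, hα⟩ := exists_eq_add_smul_of_forall_dist_le hu hLu hAt (hAtd ▸ hAtmin)
  obtain ⟨β, rfl, hβ⟩ := exists_eq_add_smul_of_forall_dist_le hu hLu hBt (hBtd ▸ hBtmin)
  obtain ⟨γ, rfl, hγ⟩ := exists_eq_add_smul_of_forall_dist_le hu hLu hCt (hCtd ▸ hCtmin)
  have hαβ : 0 ≤ α * β :=
    mul_nonneg_of_dist_add_smul_eq_abs_add_abs hu hus hAt hBt hCt (by linarith) (by linarith)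
      (by linarith) (affineIndependent_iff_not_collinear_set.mp hABC)
  have hM_mid : M = midpoint ℝ At Bt := by
    rw [← coe_orthogonalProjection_eq_of_forall_dist_le hM hMmin, hO,
      coe_orthogonalProjection_midpoint_add_smul hus hAt hBt]
  refine ⟨?_, hM_mid⟩
  have hαβ_abs : |α + β| = |α| + |β| := (abs_add_eq_add_abs_iff α β).mpr (mul_nonneg_iff.mp hαβ)
  rw [hM_mid, hO, midpoint_add_smul, dist_eq_norm, add_sub_cancel_left, norm_smul, hu, mul_one,
    Real.norm_eq_abs, abs_div, abs_two, hαβ_abs, ← hc]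
  linarith

/-- when the half-angle tangents sum to 2, the outer Soddy
circle degenerates to a line `L` tangent to the three kissing circles; then
the circle with diameter `AB` is also tangent to `L`: the foot `M` of the
perpendicular from the midpoint `O` of `AB` to `L` satisfies
`|OM| = |AB| / 2`, and `M` is the midpoint of the tangency points `At, Bt`. -/
theorem stmt18 (A B C : EuclideanSpace ℝ (Fin 2))
    (hA0 : A 0 = -1) (hA1 : A 1 = 0) (hB0 : B 0 = 1) (hB1 : B 1 = 0)
    (hABC : AffineIndependent ℝ ![A, B, C])
    (a b c p : ℝ)
    (ha : a = dist B C) (hb : b = dist C A) (hc : c = dist A B)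
    (hp : p = (a + b + c) / 2)
    (htan : Real.tan (∠ B A C / 2) + Real.tan (∠ A B C / 2)
      + Real.tan (∠ B C A / 2) = 2)
    (L : AffineSubspace ℝ (EuclideanSpace ℝ (Fin 2)))
    (hline : ∃ X Y : EuclideanSpace ℝ (Fin 2), X ≠ Y ∧
      L = affineSpan ℝ ({X, Y} : Set (EuclideanSpace ℝ (Fin 2))))
    (At Bt Ct T : EuclideanSpace ℝ (Fin 2))
    -- `L` is tangent to the kissing circle centered at `A` at `At`:
    (hAt : At ∈ L) (hAtd : dist A At = p - a)
    (hAtmin : ∀ Q ∈ L, p - a ≤ dist A Q)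
    -- `L` is tangent to the kissing circle centered at `B` at `Bt`:
    (hBt : Bt ∈ L) (hBtd : dist B Bt = p - b)
    (hBtmin : ∀ Q ∈ L, p - b ≤ dist B Q)
    -- `L` is tangent to the kissing circle centered at `C` at `Ct`:
    (hCt : Ct ∈ L) (hCtd : dist C Ct = p - c)
    (hCtmin : ∀ Q ∈ L, p - c ≤ dist C Q)
    -- `T` is the tangency point of the kissing circles centered at `A` and `B`:
    (hT : T ∈ segment ℝ A B) (hTA : dist A T = p - a) (hTB : dist B T = p - b)
    (O M : EuclideanSpace ℝ (Fin 2))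
    (hO : O = midpoint ℝ A B)
    -- `M` is the foot of the perpendicular from `O` to `L`:
    (hM : M ∈ L) (hMmin : ∀ Q ∈ L, dist O M ≤ dist O Q) :
    dist O M = dist A B / 2 ∧ M = midpoint ℝ At Bt :=
  stmt18_general A B C hABC a b c p ha hb hc hp L hline At Bt Ct hAt hAtd hAtmin hBt hBtd hBtmin hCt
    hCtd hCtmin O M hO hM hMmin
end
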